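/- Let R be a finite-dimensional commutative unital C-algebra and φ ∈ R* a functional such that the bilinear form (r_1,r_2) ↦ φ(r_1r_2) is nondegenerate. Then the tensor T_φ ∈ R*⊗R*⊗R* given by (r_1,r_2,r_3) ↦ φ(r_1r_2r_3) is concise and 1-generic, and T_φ is isomorphic to the multiplication tensor of R. -/
import Mathlib


open TensorProduct

noncomputable section

namespace Paper

variable {A B C : Type*} [AddCommGroup A] [Module ℂ A]
  [AddCommGroup B] [Module ℂ B] [AddCommGroup C] [Module ℂ C]

/-- Action of `X ∈ End(A)` on the `A`-factor: `X ∘_A T = (X ⊗ Id_B ⊗ Id_C)(T)`. -/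
def actA (X : Module.End ℂ A) : A ⊗[ℂ] (B ⊗[ℂ] C) →ₗ[ℂ] A ⊗[ℂ] (B ⊗[ℂ] C) :=
  TensorProduct.map X LinearMap.id

/-- Action of `Y ∈ End(B)` on the `B`-factor. -/
def actB (Y : Module.End ℂ B) : A ⊗[ℂ] (B ⊗[ℂ] C) →ₗ[ℂ] A ⊗[ℂ] (B ⊗[ℂ] C) :=
  TensorProduct.map LinearMap.id (TensorProduct.map Y LinearMap.id)

/-- Action of `Z ∈ End(C)` on the `C`-factor. -/
def actC (Z : Module.End ℂ C) : A ⊗[ℂ] (B ⊗[ℂ] C) →ₗ[ℂ] A ⊗[ℂ] (B ⊗[ℂ] C) :=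
  TensorProduct.map LinearMap.id (TensorProduct.map LinearMap.id Z)

/-- Contraction of the `A`-factor against `α ∈ A*`: `T ↦ T(α) ∈ B ⊗ C`. -/
def contrA (α : Module.Dual ℂ A) : A ⊗[ℂ] (B ⊗[ℂ] C) →ₗ[ℂ] B ⊗[ℂ] C :=
  (TensorProduct.lid ℂ (B ⊗[ℂ] C)).toLinearMap ∘ₗ TensorProduct.map α LinearMap.id

/-- Contraction of the `B`-factor against `β ∈ B*`: `T ↦ T(β) ∈ A ⊗ C`. -/
def contrB (β : Module.Dual ℂ B) : A ⊗[ℂ] (B ⊗[ℂ] C) →ₗ[ℂ] A ⊗[ℂ] C :=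
  TensorProduct.map LinearMap.id
    ((TensorProduct.lid ℂ C).toLinearMap ∘ₗ TensorProduct.map β LinearMap.id)

/-- Contraction of the `C`-factor against `γ ∈ C*`: `T ↦ T(γ) ∈ A ⊗ B`. -/
def contrC (γ : Module.Dual ℂ C) : A ⊗[ℂ] (B ⊗[ℂ] C) →ₗ[ℂ] A ⊗[ℂ] B :=
  TensorProduct.map LinearMap.id
    ((TensorProduct.rid ℂ B).toLinearMap ∘ₗ TensorProduct.map LinearMap.id γ)

/-- A tensor is concise if all three flattening maps are injective. -/
def Concise (T : A ⊗[ℂ] (B ⊗[ℂ] C)) : Prop :=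
  Function.Injective (fun α : Module.Dual ℂ A => contrA α T) ∧
  Function.Injective (fun β : Module.Dual ℂ B => contrB β T) ∧
  Function.Injective (fun γ : Module.Dual ℂ C => contrC γ T)

/-- View an element of `M ⊗ N` as a linear map `M* → N`. -/
def toHom {M N : Type*} [AddCommGroup M] [Module ℂ M] [AddCommGroup N] [Module ℂ N] :
    M ⊗[ℂ] N →ₗ[ℂ] (Module.Dual ℂ M →ₗ[ℂ] N) :=
  (dualTensorHom ℂ (Module.Dual ℂ M) N).comp
    (TensorProduct.map (Module.Dual.eval ℂ M) LinearMap.id)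

/-- A triple `(X,Y,Z)` is compatible with `T` if `X∘_A T = Y∘_B T = Z∘_C T`. -/
def Compat (T : A ⊗[ℂ] (B ⊗[ℂ] C))
    (p : Module.End ℂ A × Module.End ℂ B × Module.End ℂ C) : Prop :=
  actA p.1 T = actB p.2.1 T ∧ actB p.2.1 T = actC p.2.2 T

/-- The subspace `T(A*) ⊗ A ⊆ A ⊗ B ⊗ C`. -/
def spanA (T : A ⊗[ℂ] (B ⊗[ℂ] C)) : Submodule ℂ (A ⊗[ℂ] (B ⊗[ℂ] C)) :=
  Submodule.span ℂ {x | ∃ (a : A) (α : Module.Dual ℂ A), x = a ⊗ₜ[ℂ] contrA α T}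

/-- The subspace `T(B*) ⊗ B ⊆ A ⊗ B ⊗ C` (factors in the correct positions). -/
def spanB (T : A ⊗[ℂ] (B ⊗[ℂ] C)) : Submodule ℂ (A ⊗[ℂ] (B ⊗[ℂ] C)) :=
  Submodule.span ℂ {x | ∃ (b : B) (β : Module.Dual ℂ B),
    x = (TensorProduct.leftComm ℂ B A C) (b ⊗ₜ[ℂ] contrB β T)}

/-- The subspace `T(C*) ⊗ C ⊆ A ⊗ B ⊗ C` (factors in the correct positions). -/
def spanC (T : A ⊗[ℂ] (B ⊗[ℂ] C)) : Submodule ℂ (A ⊗[ℂ] (B ⊗[ℂ] C)) :=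
  Submodule.span ℂ {x | ∃ (c : C) (γ : Module.Dual ℂ C),
    x = (TensorProduct.congr (LinearEquiv.refl ℂ A) (TensorProduct.comm ℂ C B))
      ((TensorProduct.leftComm ℂ C A B) (c ⊗ₜ[ℂ] contrC γ T))}

/-- The triple intersection `(T(A*)⊗A) ∩ (T(B*)⊗B) ∩ (T(C*)⊗C)`. -/
def tripleInt (T : A ⊗[ℂ] (B ⊗[ℂ] C)) : Submodule ℂ (A ⊗[ℂ] (B ⊗[ℂ] C)) :=
  spanA T ⊓ spanB T ⊓ spanC T

end Paper

namespace Paper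

/-- `T` is 1-generic: each of `T(A*)`, `T(B*)`, `T(C*)` contains a full-rank element. -/
def OneGeneric {A B C : Type*} [AddCommGroup A] [Module ℂ A] [AddCommGroup B] [Module ℂ B]
    [AddCommGroup C] [Module ℂ C] (T : A ⊗[ℂ] (B ⊗[ℂ] C)) : Prop :=
  (∃ α : Module.Dual ℂ A, Function.Bijective (toHom (contrA α T))) ∧
  (∃ β : Module.Dual ℂ B, Function.Bijective (toHom (contrB β T))) ∧
  (∃ γ : Module.Dual ℂ C, Function.Bijective (toHom (contrC γ T)))

end Paper


namespace Paper

set_option synthInstance.maxHeartbeats 800000 in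
lemma pair_contrB' {A B C : Type*} [AddCommGroup A] [Module ℂ A]
    [AddCommGroup B] [Module ℂ B] [AddCommGroup C] [Module ℂ C]
    (T : A ⊗[ℂ] (B ⊗[ℂ] C)) (α : Module.Dual ℂ A) (β : Module.Dual ℂ B)
    (γ : Module.Dual ℂ C) : γ (toHom (contrB β T) α) = γ (toHom (contrA α T) β) := by
  induction T using TensorProduct.induction_on with
  | zero => simp only [map_zero, LinearMap.zero_apply]
  | tmul a y =>
    induction y using TensorProduct.induction_on with
    | zero => simp only [tmul_zero, map_zero, LinearMap.zero_apply]
    | tmul b c =>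
      simp only [contrA, contrB, toHom, LinearMap.coe_comp, Function.comp_apply, map_tmul,
        LinearMap.id_coe, id_eq, LinearEquiv.coe_coe, lid_tmul, map_smul, dualTensorHom_apply,
        Module.Dual.eval_apply, LinearMap.smul_apply, smul_eq_mul, tmul_smul, smul_tmul']
      ring
    | add y z hy hz => rw [tmul_add]; simp only [map_add, LinearMap.add_apply, hy, hz]
  | add x y hx hy => simp only [map_add, LinearMap.add_apply, hx, hy]

set_option synthInstance.maxHeartbeats 800000 in
lemma pair_contrC' {A B C : Type*} [AddCommGroup A] [Module ℂ A]
    [AddCommGroup B] [Module ℂ B] [AddCommGroup C] [Module ℂ C]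
    (T : A ⊗[ℂ] (B ⊗[ℂ] C)) (α : Module.Dual ℂ A) (β : Module.Dual ℂ B)
    (γ : Module.Dual ℂ C) : β (toHom (contrC γ T) α) = γ (toHom (contrA α T) β) := by
  induction T using TensorProduct.induction_on with
  | zero => simp only [map_zero, LinearMap.zero_apply]
  | tmul a y =>
    induction y using TensorProduct.induction_on with
    | zero => simp only [tmul_zero, map_zero, LinearMap.zero_apply]
    | tmul b c =>
      simp only [contrA, contrC, toHom, LinearMap.coe_comp, Function.comp_apply, map_tmul,
        LinearMap.id_coe, id_eq, LinearEquiv.coe_coe, lid_tmul, rid_tmul, map_smul,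
        dualTensorHom_apply, Module.Dual.eval_apply, LinearMap.smul_apply, smul_eq_mul,
        tmul_smul, smul_tmul']
      ring
    | add y z hy hz => rw [tmul_add]; simp only [map_add, LinearMap.add_apply, hy, hz]
  | add x y hx hy => simp only [map_add, LinearMap.add_apply, hx, hy]

end Paper

open Paper in
/-- let `R` be a finite-dimensional commutative unital ℂ-algebra and `φ ∈ R*`
with `(r₁,r₂) ↦ φ(r₁r₂)` nondegenerate.  Then the tensor `T_φ ∈ R*⊗R*⊗R*` given by
`(r₁,r₂,r₃) ↦ φ(r₁r₂r₃)` — here represented by any tensor `T` whose trilinear form is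
identified with it via linear isomorphisms `fa, fb, fc` — is concise and 1-generic, and is
isomorphic to the multiplication tensor of `R`. -/
theorem stmt19 {A B C : Type*} [AddCommGroup A] [Module ℂ A] [AddCommGroup B] [Module ℂ B]
    [AddCommGroup C] [Module ℂ C] [FiniteDimensional ℂ A] [FiniteDimensional ℂ B]
    [FiniteDimensional ℂ C]
    {R : Type*} [CommRing R] [Algebra ℂ R] [FiniteDimensional ℂ R]
    (φ : Module.Dual ℂ R)
    (hnondeg : ∀ r : R, r ≠ 0 → ∃ r' : R, φ (r * r') ≠ 0)
    (T : A ⊗[ℂ] (B ⊗[ℂ] C))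
    (fa : Module.Dual ℂ A ≃ₗ[ℂ] R) (fb : Module.Dual ℂ B ≃ₗ[ℂ] R)
    (fc : Module.Dual ℂ C ≃ₗ[ℂ] R)
    (hT : ∀ (α : Module.Dual ℂ A) (β : Module.Dual ℂ B) (γ : Module.Dual ℂ C),
      γ (toHom (contrA α T) β) = φ (fa α * fb β * fc γ)) :
    Concise T ∧ OneGeneric T ∧
    ∃ (ga : Module.Dual ℂ A ≃ₗ[ℂ] R) (gb : Module.Dual ℂ B ≃ₗ[ℂ] R)
        (gc : Module.Dual ℂ C ≃ₗ[ℂ] Module.Dual ℂ R),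
      ∀ (α : Module.Dual ℂ A) (β : Module.Dual ℂ B) (γ : Module.Dual ℂ C),
        γ (toHom (contrA α T) β) = gc γ (ga α * gb β) := by
  classical
  have hR : ∀ r : R, (∀ t : R, φ (r * t) = 0) → r = 0 := by
    intro r h
    by_contra hr
    obtain ⟨r', h'⟩ := hnondeg r hr
    exact h' (h r')
  have cancel : ∀ u v : R, (∀ t : R, φ (u * t) = φ (v * t)) → u = v := by
    intro u v h
    rw [← sub_eq_zero]
    apply hR
    intro t
    rw [sub_mul, map_sub, h, sub_self]
  have key : ∀ (α : Module.Dual ℂ A) (β : Module.Dual ℂ B) (γ : Module.Dual ℂ C),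
      γ (toHom (contrB β T) α) = φ (fa α * fb β * fc γ) := by
    intro α β γ; rw [pair_contrB', hT]
  have keyC : ∀ (α : Module.Dual ℂ A) (β : Module.Dual ℂ B) (γ : Module.Dual ℂ C),
      β (toHom (contrC γ T) α) = φ (fa α * fb β * fc γ) := by
    intro α β γ; rw [pair_contrC', hT]
  refine ⟨⟨?_, ?_, ?_⟩, ⟨?_, ?_, ?_⟩, ?_⟩
  · -- flattening A injective
    intro α α' h
    apply fa.injective
    apply cancel
    intro t
    have h1 := hT α (fb.symm t) (fc.symm 1)
    rw [show contrA α T = contrA α' T from h] at h1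
    have h2 := hT α' (fb.symm t) (fc.symm 1)
    rw [h1] at h2
    simpa only [LinearEquiv.apply_symm_apply, mul_one] using h2
  · -- flattening B injective
    intro β β' h
    apply fb.injective
    apply cancel
    intro t
    have h1 := key (fa.symm 1) β (fc.symm t)
    rw [show contrB β T = contrB β' T from h] at h1
    have h2 := key (fa.symm 1) β' (fc.symm t)
    rw [h1] at h2
    simpa only [LinearEquiv.apply_symm_apply, one_mul] using h2
  · -- flattening C injective
    intro γ γ' h
    apply fc.injective
    apply cancel
    intro t
    have h1 := keyC (fa.symm 1) (fb.symm t) γ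
    rw [show contrC γ T = contrC γ' T from h] at h1
    have h2 := keyC (fa.symm 1) (fb.symm t) γ'
    rw [h1] at h2
    simp only [LinearEquiv.apply_symm_apply, one_mul] at h2
    rw [mul_comm (fc γ) t, mul_comm (fc γ') t]
    exact h2
  · -- 1-generic in A
    refine ⟨fa.symm 1, ?_⟩
    have hdim : Module.finrank ℂ (Module.Dual ℂ B) = Module.finrank ℂ C := by
      have h1 := fb.finrank_eq
      have h2 := fc.finrank_eq
      have h3 : Module.finrank ℂ (Module.Dual ℂ C) = Module.finrank ℂ C :=
        Subspace.dual_finrank_eq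
      omega
    have hinj : Function.Injective (toHom (contrA (fa.symm 1) T)) := by
      rw [injective_iff_map_eq_zero]
      intro β hβ
      apply fb.injective
      rw [map_zero]
      apply hR
      intro t
      have h1 := hT (fa.symm 1) β (fc.symm t)
      rw [hβ, map_zero] at h1
      simp only [LinearEquiv.apply_symm_apply, one_mul] at h1
      exact h1.symm
    exact ⟨hinj, (LinearMap.injective_iff_surjective_of_finrank_eq_finrank hdim).mp hinj⟩
  · -- 1-generic in B
    refine ⟨fb.symm 1, ?_⟩
    have hdim : Module.finrank ℂ (Module.Dual ℂ A) = Module.finrank ℂ C := by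
      have h1 := fa.finrank_eq
      have h2 := fc.finrank_eq
      have h3 : Module.finrank ℂ (Module.Dual ℂ C) = Module.finrank ℂ C :=
        Subspace.dual_finrank_eq
      omega
    have hinj : Function.Injective (toHom (contrB (fb.symm 1) T)) := by
      rw [injective_iff_map_eq_zero]
      intro α hα
      apply fa.injective
      rw [map_zero]
      apply hR
      intro t
      have h1 := key α (fb.symm 1) (fc.symm t)
      rw [hα, map_zero] at h1
      simp only [LinearEquiv.apply_symm_apply, mul_one] at h1
      exact h1.symm
    exact ⟨hinj, (LinearMap.injective_iff_surjective_of_finrank_eq_finrank hdim).mp hinj⟩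
  · -- 1-generic in C
    refine ⟨fc.symm 1, ?_⟩
    have hdim : Module.finrank ℂ (Module.Dual ℂ A) = Module.finrank ℂ B := by
      have h1 := fa.finrank_eq
      have h2 := fb.finrank_eq
      have h3 : Module.finrank ℂ (Module.Dual ℂ B) = Module.finrank ℂ B :=
        Subspace.dual_finrank_eq
      omega
    have hinj : Function.Injective (toHom (contrC (fc.symm 1) T)) := by
      rw [injective_iff_map_eq_zero]
      intro α hα
      apply fa.injective
      rw [map_zero]
      apply hR
      intro t
      have h1 := keyC α (fb.symm t) (fc.symm 1)
      rw [hα, map_zero] at h1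
      simp only [LinearEquiv.apply_symm_apply, mul_one] at h1
      exact h1.symm
    exact ⟨hinj, (LinearMap.injective_iff_surjective_of_finrank_eq_finrank hdim).mp hinj⟩
  · -- isomorphic to multiplication tensor
    refine ⟨fa, fb, ?_⟩
    set m : R →ₗ[ℂ] Module.Dual ℂ R :=
      (LinearMap.llcomp ℂ R R ℂ φ) ∘ₗ (LinearMap.mul ℂ R) with hmdef
    have hm : ∀ r s : R, m r s = φ (r * s) := by
      intro r s
      simp [hmdef, LinearMap.mul_apply']
    have hminj : Function.Injective m := by
      rw [injective_iff_map_eq_zero]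
      intro r hr
      apply hR
      intro t
      have := LinearMap.congr_fun hr t
      rw [hm] at this
      simpa using this
    have hdim : Module.finrank ℂ R = Module.finrank ℂ (Module.Dual ℂ R) :=
      Subspace.dual_finrank_eq.symm
    have hmbij : Function.Bijective m :=
      ⟨hminj, (LinearMap.injective_iff_surjective_of_finrank_eq_finrank hdim).mp hminj⟩
    refine ⟨fc.trans (LinearEquiv.ofBijective m hmbij), ?_⟩
    intro α β γ
    rw [hT]
    show φ (fa α * fb β * fc γ) = m (fc γ) (fa α * fb β)
    rw [hm, mul_comm]
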